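/- arXiv:cs/0310064 — 5 statements merged into one kernel-verified Lean document; each statement's English description precedes it below -/
import Mathlib

section
/- For all positive integers k and l, there exists a positive integer m such that every coloring c : {1,…,m} → {1,…,k} contains a monochromatic arithmetic progression of length l. Consequently, the van der Waerden number W(k,l) is well defined. -/
/-- `c` (viewed as a coloring of `{1,…,m}`) contains a monochromatic arithmetic
progression of length `l`: there are positive `a`, `d` with `a + (l-1)d ≤ m`
and `c (a) = c (a+d) = … = c (a+(l-1)d)`. -/
def ContainsAP (l m : ℕ) (c : ℕ → ℕ) : Prop :=
  ∃ a d : ℕ, 0 < a ∧ 0 < d ∧ a + (l - 1) * d ≤ m ∧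
    ∀ j : ℕ, j ≤ l - 1 → c (a + j * d) = c a

/-- `c` is a coloring of `{1,…,m}` with colors in `{1,…,k}`. -/
def IsColoring (k m : ℕ) (c : ℕ → ℕ) : Prop :=
  ∀ i : ℕ, 1 ≤ i → i ≤ m → 1 ≤ c i ∧ c i ≤ k

/-- The van der Waerden number `W k l`: the least positive `m` such that every
coloring of `{1,…,m}` with `k` colors contains a monochromatic arithmetic
progression of length `l`. -/
noncomputable def vdW (k l : ℕ) : ℕ :=
  sInf {m : ℕ | 0 < m ∧ ∀ c : ℕ → ℕ, IsColoring k m c → ContainsAP l m c}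

/-!
Van der Waerden's theorem with an explicit bound, via Hales–Jewett. Take `ι` such that every
`κ`-coloring of the cube `ι → {0,…,n}` has a monochromatic combinatorial line, and color a point
`v` of the cube by the color of `∑ i, v i`. Along a line, this coordinate sum is `a + x * d`, with
`d > 0` the number of active coordinates, so a monochromatic line gives a monochromatic arithmetic
progression of length `n + 1` inside `{0, …, |ι| * n}`.
-/

open Finset

namespace Combinatorics.Line

theorem exists_sum_val_eq_add_mul {ι : Type*} [Fintype ι] {n : ℕ} (L : Line (Fin (n + 1)) ι) :
    ∃ d > 0, ∃ a, ∀ x : Fin (n + 1), ∑ i, (L x i : ℕ) = a + x * d := by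
  classical
  set s : Finset ι := {i | L.idxFun i = none}
  refine ⟨#s, card_pos.mpr ⟨L.proper.choose, by simpa [s] using L.proper.choose_spec⟩,
    ∑ i ∈ sᶜ, (L 0 i : ℕ), fun x => ?_⟩
  rw [← sum_add_sum_compl s, add_comm (∑ i ∈ sᶜ, (L 0 i : ℕ))]
  congr 1
  · rw [sum_congr rfl fun i hi => by rw [L.apply_none x i (by simpa [s] using hi)],
      sum_const, smul_eq_mul, mul_comm]
  · refine sum_congr rfl fun i hi => ?_
    obtain ⟨y, hy⟩ := Option.ne_none_iff_exists'.mp (by simpa [s] using hi)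
    rw [L.apply_some hy, L.apply_some hy]

end Combinatorics.Line

theorem exists_bound_mono_arithProgression (κ : Type*) [Finite κ] (n : ℕ) :
    ∃ N, ∀ C : ℕ → κ, ∃ a d, 0 < d ∧ a + n * d ≤ N ∧ ∀ j ≤ n, C (a + j * d) = C a := by
  obtain ⟨ι, _, hι⟩ := Combinatorics.Line.exists_mono_in_high_dimension (Fin (n + 1)) κ
  refine ⟨Fintype.card ι * n, fun C => ?_⟩
  obtain ⟨L, c, hL⟩ := hι fun v => C (∑ i, (v i : ℕ))
  obtain ⟨d, hd, a, hsum⟩ := L.exists_sum_val_eq_add_mul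
  have hcolor : ∀ x : Fin (n + 1), C (a + x * d) = c := fun x => hsum x ▸ hL x
  refine ⟨a, d, hd, ?_, fun j hj => ?_⟩
  · calc a + n * d = ∑ i, (L (Fin.last n) i : ℕ) := by rw [hsum, Fin.val_last]
      _ ≤ Fintype.card ι * n :=
        sum_le_card_nsmul _ _ _ fun i _ => Nat.le_of_lt_succ (L (Fin.last n) i).isLt
  · simpa using (hcolor ⟨j, by omega⟩).trans (hcolor 0).symm

theorem vdW_well_defined_general (k l : ℕ) :
    ∃ m : ℕ, 0 < m ∧ ∀ c : ℕ → ℕ, IsColoring k m c → ContainsAP l m c := by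
  obtain ⟨N, hN⟩ := exists_bound_mono_arithProgression (Fin (k + 1)) (l - 1)
  refine ⟨N + 1, N.succ_pos, fun c hc => ?_⟩
  obtain ⟨a, d, hd, haN, hmono⟩ := hN fun x => ⟨min (c (x + 1)) k, by omega⟩
  refine ⟨a + 1, d, a.succ_pos, hd, by omega, fun j hj => ?_⟩
  have hjN : a + j * d ≤ N := le_trans (by gcongr) haN
  have hcolor_le : ∀ x ≤ N, c (x + 1) ≤ k := fun x hx => (hc (x + 1) (by omega) (by omega)).2
  have h := congrArg Fin.val (hmono j hj)
  simp only [min_eq_left (hcolor_le _ hjN), min_eq_left (hcolor_le a (by omega))] at h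
  rwa [add_right_comm]

theorem vdW_well_defined (k l : ℕ) (hk : 0 < k) (hl : 0 < l) :
    ∃ m : ℕ, 0 < m ∧ ∀ c : ℕ → ℕ, IsColoring k m c → ContainsAP l m c :=
  vdW_well_defined_general k l
end

section
/- W(2,6) > 341; that is, there exists a coloring c : {1,…,341} → {1,2} containing no monochromatic arithmetic progression of length 6. -/
/-! ### The explicit coloring -/

def vdwBits : List ℕ :=
  [0,0,0,1,0,1,1,1,1,1,0,0,1,1,0,1,0,1,0,0,0,0,1,1,0,1,0,0,0,0,1,0,0,0,1,
   0,1,1,0,0,0,1,0,1,1,1,0,1,1,1,1,0,1,0,0,1,1,1,1,0,1,1,1,0,0,1,1,0,0]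

def vdwC (n : ℕ) : ℕ := vdwBits.getD ((n - 1) % 69) 0 + 1

lemma vdwBits_le : ∀ r : ℕ, r < 69 → vdwBits.getD r 0 ≤ 1 := by decide

set_option maxRecDepth 100000 in
set_option maxHeartbeats 1000000 in
lemma cyc : ∀ r : ℕ, r < 69 → ∀ d : ℕ, d < 69 →
    d = 0 ∨ ∃ j : ℕ, j < 6 ∧ vdwC (1 + r + j * d) ≠ vdwC (1 + r) := by decide

lemma vdwC_coloring : IsColoring 2 341 vdwC := by
  intro i h1 _h2
  refine ⟨Nat.le_add_left 1 _, ?_⟩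
  have hlt : (i - 1) % 69 < 69 := Nat.mod_lt _ (by norm_num)
  have := vdwBits_le _ hlt
  simp only [vdwC]
  omega

lemma vdwC_mod (n n' : ℕ) (h : (n - 1) % 69 = (n' - 1) % 69) : vdwC n = vdwC n' := by
  simp only [vdwC, h]

lemma vdwC_noAP : ¬ ContainsAP 6 341 vdwC := by
  rintro ⟨a, d, ha, hd, hle, hj⟩
  simp only [show (6:ℕ) - 1 = 5 from rfl] at hle hj
  have hd' : d < 69 := by omega
  set r := (a - 1) % 69 with hr
  have hr69 : r < 69 := Nat.mod_lt _ (by norm_num)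
  rcases cyc r hr69 d hd' with h0 | ⟨j, hj6, hne⟩
  · omega
  · apply hne
    have e1 : vdwC (1 + r + j * d) = vdwC (a + j * d) := by
      apply vdwC_mod
      omega
    have e2 : vdwC (1 + r) = vdwC a := by
      apply vdwC_mod
      omega
    rw [e1, e2]
    exact hj j (by omega)

/-! ### Finitary van der Waerden from Hales–Jewett -/

open Finset in
lemma vdw_set_nonempty :
    ∃ m : ℕ, 0 < m ∧ ∀ c : ℕ → ℕ, IsColoring 2 m c → ContainsAP 6 m c := by
  classical
  obtain ⟨ι, _ιfin, hι⟩ := Combinatorics.Line.exists_mono_in_high_dimension (Fin 6) (Fin 2)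
  refine ⟨5 * Fintype.card ι + 1, Nat.succ_pos _, fun c hc => ?_⟩
  set m : ℕ := 5 * Fintype.card ι + 1 with hm
  set C : (ι → Fin 6) → Fin 2 := fun x => if c (1 + ∑ i, (x i : ℕ)) = 1 then 0 else 1 with hC
  obtain ⟨l, k0, hk⟩ := hι C
  set T : Finset ι := Finset.univ.filter (fun i => l.idxFun i = none) with hT
  set A : ℕ := ∑ i, ((l.idxFun i).map Fin.val).getD 0 with hA
  have hsum : ∀ k : Fin 6, (∑ i, ((l.idxFun i).getD k : ℕ)) = A + T.card * (k : ℕ) := by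
    intro k
    have hpt : ∀ i : ι, ((l.idxFun i).getD k : ℕ)
        = ((l.idxFun i).map Fin.val).getD 0 + (if l.idxFun i = none then (k : ℕ) else 0) := by
      intro i; cases h : l.idxFun i <;> simp [h]
    rw [Finset.sum_congr rfl fun i _ => hpt i, Finset.sum_add_distrib]
    congr 1
    rw [← Finset.sum_filter, Finset.sum_const, smul_eq_mul]
  have hdpos : 0 < T.card := by
    obtain ⟨i, hi⟩ := l.proper
    exact Finset.card_pos.mpr ⟨i, Finset.mem_filter.mpr ⟨Finset.mem_univ i, hi⟩⟩
  have hA5 : A + T.card * 5 ≤ 5 * Fintype.card ι := by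
    have h5 : ((5 : Fin 6) : ℕ) = 5 := rfl
    calc A + T.card * 5 = ∑ i, ((l.idxFun i).getD (5 : Fin 6) : ℕ) := by
          rw [hsum (5 : Fin 6), h5]
      _ ≤ ∑ _i : ι, 5 := Finset.sum_le_sum fun i _ => Fin.is_le _
      _ = 5 * Fintype.card ι := by rw [Finset.sum_const, smul_eq_mul, Finset.card_univ]; ring
  -- the color values along the line
  have hval : ∀ j : ℕ, j ≤ 5 →
      (if c (1 + (A + T.card * j)) = 1 then (0 : Fin 2) else 1) = k0 := by
    intro j hj5
    have hjk : ((⟨j, by omega⟩ : Fin 6) : ℕ) = j := rfl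
    have := hk (⟨j, by omega⟩ : Fin 6)
    have hline : C (l (⟨j, by omega⟩ : Fin 6)) =
        if c (1 + (A + T.card * j)) = 1 then (0 : Fin 2) else 1 := by
      simp only [hC]
      congr 2
      have : (∑ i, ((l (⟨j, by omega⟩ : Fin 6)) i : ℕ))
          = ∑ i, ((l.idxFun i).getD (⟨j, by omega⟩ : Fin 6) : ℕ) := rfl
      rw [this, hsum, hjk]
    rw [← hline]
    exact this
  -- bounds
  have hbound : ∀ j : ℕ, j ≤ 5 → 1 ≤ 1 + (A + T.card * j) ∧ 1 + (A + T.card * j) ≤ m := by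
    intro j hj5
    constructor
    · omega
    · have : T.card * j ≤ T.card * 5 := Nat.mul_le_mul_left _ hj5
      omega
  refine ⟨1 + A, T.card, by omega, hdpos, ?_, ?_⟩
  · show 1 + A + (6 - 1) * T.card ≤ m
    have : (6 - 1) * T.card = T.card * 5 := by ring
    omega
  · intro j hj
    have hj5 : j ≤ 5 := hj
    have e1 := hval j hj5
    have e2 := hval 0 (by norm_num)
    have harg0 : 1 + A + 0 * T.card = 1 + (A + T.card * 0) := by ring
    have hargj : 1 + A + j * T.card = 1 + (A + T.card * j) := by ring
    have hcj := hc _ (hbound j hj5).1 (hbound j hj5).2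
    have hc0 := hc _ (hbound 0 (by norm_num)).1 (hbound 0 (by norm_num)).2
    rw [hargj, show (1 : ℕ) + A = 1 + (A + T.card * 0) by ring]
    rw [← e2] at e1
    split_ifs at e1 with h1 h2 h2
    · omega
    · exact absurd e1 (by decide)
    · exact absurd e1 (by decide)
    · omega

theorem vdW_two_six_gt :
    vdW 2 6 > 341 ∧
    ∃ c : ℕ → ℕ, IsColoring 2 341 c ∧ ¬ ContainsAP 6 341 c := by
  constructor
  · obtain ⟨m, hm⟩ := vdw_set_nonempty
    have hne : {m : ℕ | 0 < m ∧ ∀ c : ℕ → ℕ, IsColoring 2 m c → ContainsAP 6 m c}.Nonempty :=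
      ⟨m, hm⟩
    have hmem := Nat.sInf_mem hne
    rw [Set.mem_setOf_eq] at hmem
    obtain ⟨hpos, hall⟩ := hmem
    by_contra hle
    push_neg at hle
    have hle' : vdW 2 6 ≤ 341 := hle
    have hcol : IsColoring 2 (vdW 2 6) vdwC := fun i h1 h2 =>
      vdwC_coloring i h1 (le_trans h2 hle')
    obtain ⟨a, d, ha, hd, hb, hj⟩ := hall vdwC hcol
    exact vdwC_noAP ⟨a, d, ha, hd, le_trans hb hle', hj⟩
  · exact ⟨vdwC, vdwC_coloring, vdwC_noAP⟩
end

section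
/- W(2,8) > 1295; that is, there exists a coloring c : {1,…,1295} → {1,2} containing no monochromatic arithmetic progression of length 8. -/
/-!
Colour `i` by whether it is a quadratic non-residue modulo the prime `653`. That no `8`-term
progression in `{1,…,1295}` is monochromatic is a finite check, run in the kernel on bit masks:
for each colour class `M` and difference `d`, the AND of `M` shifted by `0, d, …, 7d` vanishes.
Since `vdW` is an infimum and `sInf ∅ = 0`, the lower bound also needs van der Waerden's theorem,
which follows from the Hales–Jewett theorem.
-/

open Combinatorics Finset

theorem IsColoring.mono {k m n : ℕ} {c : ℕ → ℕ} (hc : IsColoring k m c) (hnm : n ≤ m) :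
    IsColoring k n c :=
  fun i hi hin => hc i hi (hin.trans hnm)

theorem ContainsAP.mono {l m n : ℕ} {c : ℕ → ℕ} (hc : ContainsAP l m c) (hmn : m ≤ n) :
    ContainsAP l n c :=
  let ⟨a, d, ha, hd, hle, hmono⟩ := hc
  ⟨a, d, ha, hd, hle.trans hmn, hmono⟩

theorem Combinatorics.Line.sum_val_apply {ι : Type*} [Fintype ι] {n : ℕ}
    (L : Line (Fin (n + 1)) ι) (x : Fin (n + 1)) :
    ∑ i, (L x i : ℕ) = ∑ i, (L 0 i : ℕ) + #{i | L.idxFun i = none} * x := by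
  have h : ∀ i, (L x i : ℕ) = L 0 i + if L.idxFun i = none then (x : ℕ) else 0 := by
    intro i
    cases hi : L.idxFun i <;> simp [hi]
  simp only [h, sum_add_distrib, ← sum_filter, sum_const, smul_eq_mul]

/-- A monochromatic combinatorial line in `ι → Fin (l + 1)` maps to a
monochromatic `(l + 1)`-term progression under `v ↦ 1 + ∑ i, v i`, its difference being the number
of moving coordinates. -/
theorem exists_forall_containsAP (k l : ℕ) :
    ∃ m, 0 < m ∧ ∀ c, IsColoring k m c → ContainsAP (l + 1) m c := by
  obtain ⟨ι, _, hι⟩ := Line.exists_mono_in_high_dimension (Fin (l + 1)) (Set.Icc 1 k)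
  refine ⟨Fintype.card ι * l + 1, Nat.succ_pos _, fun c hc => ?_⟩
  let pt : (ι → Fin (l + 1)) → ℕ := fun v => 1 + ∑ i, (v i : ℕ)
  have hpt_le : ∀ v, pt v ≤ Fintype.card ι * l + 1 := by
    intro v
    have := sum_le_card_nsmul univ (fun i => (v i : ℕ)) l fun i _ => Nat.lt_succ_iff.mp (v i).2
    simp only [card_univ, smul_eq_mul] at this
    simp only [pt]
    omega
  obtain ⟨L, col, hL⟩ := hι fun v => ⟨c (pt v), hc _ (Nat.le_add_right 1 _) (hpt_le v)⟩
  have hmono : ∀ x, c (pt (L x)) = col := fun x => congrArg Subtype.val (hL x)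
  have hpt_line : ∀ x, pt (L x) = pt (L 0) + #{i | L.idxFun i = none} * x := by
    intro x
    change 1 + _ = 1 + _ + _
    rw [L.sum_val_apply x, add_assoc]
  refine ⟨pt (L 0), #{i | L.idxFun i = none}, Nat.le_add_right 1 _,
    card_pos.mpr ⟨L.proper.choose, by simpa using L.proper.choose_spec⟩, ?_, fun j hj => ?_⟩
  · have := hpt_le (L (Fin.last l))
    rw [hpt_line, Fin.val_last] at this
    rwa [Nat.add_sub_cancel, mul_comm]
  · have := hpt_line ⟨j, by omega⟩
    simp only at this
    rw [mul_comm, ← this, hmono, hmono]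

theorem lt_vdW_of_not_containsAP {k l m : ℕ} {c : ℕ → ℕ} (hc : IsColoring k m c)
    (hfree : ¬ ContainsAP (l + 1) m c) : m < vdW k (l + 1) := by
  by_contra! hle
  obtain ⟨n, hn⟩ := exists_forall_containsAP k l
  obtain ⟨-, hvdW⟩ := Nat.sInf_mem (⟨n, hn⟩ :
    {m | 0 < m ∧ ∀ c, IsColoring k m c → ContainsAP (l + 1) m c}.Nonempty)
  exact hfree ((hvdW c (hc.mono hle)).mono hle)

def apMask (B d : ℕ) : ℕ → ℕ
  | 0 => B
  | l + 1 => apMask B d l &&& B >>> ((l + 1) * d)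

theorem testBit_apMask (B d l p : ℕ) :
    (apMask B d l).testBit p = true ↔ ∀ j ≤ l, B.testBit (p + j * d) = true := by
  induction l with
  | zero => simp [apMask]
  | succ l ih =>
    simp only [apMask, Nat.testBit_and, Nat.testBit_shiftRight, Bool.and_eq_true, ih,
      Nat.le_succ_iff, add_comm p]
    constructor
    · rintro ⟨h, h'⟩ j (hj | rfl)
      exacts [h j hj, h']
    · intro h
      exact ⟨fun j hj => h j (Or.inl hj), h _ (Or.inr rfl)⟩

def IsColorMask (m : ℕ) (c : ℕ → ℕ) (x M : ℕ) : Prop :=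
  ∀ i < m, M.testBit i = true ↔ c (i + 1) = x

theorem not_containsAP_of_apMask_eq_zero {k l m : ℕ} {c : ℕ → ℕ} (hl : 0 < l)
    (hc : IsColoring k m c)
    (hmask : ∀ x, 1 ≤ x → x ≤ k → ∃ M, IsColorMask m c x M ∧ ∀ d < m, apMask M (d + 1) l = 0) :
    ¬ ContainsAP (l + 1) m c := by
  rintro ⟨a, d, ha, hd, hle, hmono⟩
  simp only [Nat.add_sub_cancel] at hle hmono
  have hld : d ≤ l * d := Nat.le_mul_of_pos_left d hl
  obtain ⟨M, hM, hzero⟩ := hmask (c a) (hc a ha (by omega)).1 (hc a ha (by omega)).2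
  have hbit : (apMask M d l).testBit (a - 1) = true := by
    refine (testBit_apMask M d l (a - 1)).mpr fun j hj => ?_
    have hjd : j * d ≤ l * d := Nat.mul_le_mul_right d hj
    rw [hM _ (by omega), show a - 1 + j * d + 1 = a + j * d by omega]
    exact hmono j hj
  rw [show d = d - 1 + 1 by omega, hzero (d - 1) (by omega), Nat.zero_testBit] at hbit
  exact Bool.false_ne_true hbit

/-- By Euler's criterion, colour 2 marks exactly the quadratic non-residues modulo the prime `p`. -/
def nonresidueColoring (p i : ℕ) : ℕ := if i ^ (p / 2) % p = p - 1 then 2 else 1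

theorem isColoring_nonresidueColoring (p m : ℕ) : IsColoring 2 m (nonresidueColoring p) := by
  intro i _ _
  unfold nonresidueColoring
  split <;> omega

def nonresidueMask : ℕ :=
  222331268650954840333247193360208990185285946624279546899825449358974915350483425771428484463036515293722282004944900253105169544353997237996929986636369232935582486762902344458735578954133546510936196891225885690011869960823860493031423275331886156895542060670999228147880901066229293286859554774055518953517096087321592503701189488602174902789703960818855555436823871384531281509053311126

theorem isColorMask_nonresidueMask :
    IsColorMask 1295 (nonresidueColoring 653) 2 nonresidueMask := by
  unfold IsColorMask nonresidueColoring
  decide +kernel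

def residueMask : ℕ := nonresidueMask ^^^ (2 ^ 1295 - 1)

theorem isColorMask_residueMask : IsColorMask 1295 (nonresidueColoring 653) 1 residueMask := by
  unfold IsColorMask nonresidueColoring
  decide +kernel

theorem apMask_nonresidueMask_eq_zero : ∀ d < 1295, apMask nonresidueMask (d + 1) 7 = 0 := by
  decide +kernel

theorem apMask_residueMask_eq_zero : ∀ d < 1295, apMask residueMask (d + 1) 7 = 0 := by
  decide +kernel

theorem vdW_two_eight_gt :
    vdW 2 8 > 1295 ∧
    ∃ c : ℕ → ℕ, IsColoring 2 1295 c ∧ ¬ ContainsAP 8 1295 c := by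
  have hc := isColoring_nonresidueColoring 653 1295
  have hfree : ¬ ContainsAP 8 1295 (nonresidueColoring 653) := by
    refine not_containsAP_of_apMask_eq_zero (by norm_num) hc fun x hx1 hx2 => ?_
    interval_cases x
    · exact ⟨_, isColorMask_residueMask, apMask_residueMask_eq_zero⟩
    · exact ⟨_, isColorMask_nonresidueMask, apMask_nonresidueMask_eq_zero⟩
  exact ⟨lt_vdW_of_not_containsAP hc hfree, _, hc, hfree⟩
end

section
/- W(3,4) > 193; that is, there exists a coloring c : {1,…,193} → {1,2,3} containing no monochromatic arithmetic progression of length 4. -/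
/-- An explicit good coloring of `{1,…,193}` (cubic residue classes mod 97). -/
def vdwList : List ℕ :=
  [1,2,2,3,2,3,2,1,3,3,3,1,2,3,3,2,3,1,1,1,3,1,3,2,3,3,1,1,2,1,2,3,1,1,3,2,2,2,3,2,2,1,2,2,1,1,1,3,3,1,1,1,2,2,1,2,2,3,2,2,2,3,1,1,3,2,1,2,1,1,3,3,2,3,1,3,1,1,1,3,2,3,3,2,1,3,3,3,1,2,3,2,3,2,2,1,1,1,2,2,3,2,3,2,1,3,3,3,1,2,3,3,2,3,1,1,1,3,1,3,2,3,3,1,1,2,1,2,3,1,1,3,2,2,2,3,2,2,1,2,2,1,1,1,3,3,1,1,1,2,2,1,2,2,3,2,2,2,3,1,1,3,2,1,2,1,1,3,3,2,3,1,3,1,1,1,3,2,3,3,2,1,3,3,3,1,2,3,2,3,2,2,1]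

def vdwCol : ℕ → ℕ := fun n => vdwList.getD (n - 1) 1

set_option maxRecDepth 100000
set_option maxHeartbeats 1000000

lemma vdwCol_isColoring : IsColoring 3 193 vdwCol := by
  have h : ∀ i < 194, 1 ≤ i → i ≤ 193 → 1 ≤ vdwCol i ∧ vdwCol i ≤ 3 := by decide
  intro i h1 h2
  exact h i (by omega) h1 h2

lemma vdwCol_noAP : ¬ ContainsAP 4 193 vdwCol := by
  have h : ∀ a < 194, ∀ d < 66,
      ¬ (0 < a ∧ 0 < d ∧ a + 3 * d ≤ 193 ∧ ∀ j < 4, vdwCol (a + j * d) = vdwCol a) := by decide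
  rintro ⟨a, d, ha, hd, hle, hj⟩
  have hle' : a + 3 * d ≤ 193 := hle
  exact h a (by omega) d (by omega) ⟨ha, hd, hle', fun j hj' => hj j (by omega)⟩

open Combinatorics in
lemma vdw_finitary : ∃ m : ℕ, 0 < m ∧
    ∀ c : ℕ → ℕ, IsColoring 3 m c → ContainsAP 4 m c := by
  classical
  obtain ⟨ι, _inst, hι⟩ := Line.exists_mono_in_high_dimension (Fin 4) (Fin 3)
  refine ⟨3 * Fintype.card ι + 1, by omega, fun c hc => ?_⟩
  have hsum : ∀ v : ι → Fin 4, ∑ i, (v i : ℕ) ≤ 3 * Fintype.card ι := by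
    intro v
    calc ∑ i, (v i : ℕ) ≤ ∑ _i : ι, 3 :=
          Finset.sum_le_sum (fun i _ => by omega)
      _ = 3 * Fintype.card ι := by
          simp [Finset.sum_const, mul_comm]
  have hcol : ∀ v : ι → Fin 4, c (1 + ∑ i, (v i : ℕ)) - 1 < 3 := by
    intro v
    have := hc (1 + ∑ i, (v i : ℕ)) (by omega) (by have := hsum v; omega)
    omega
  obtain ⟨l, k, hl⟩ := hι (fun v => (⟨c (1 + ∑ i, (v i : ℕ)) - 1, hcol v⟩ : Fin 3))
  set s : Finset ι := Finset.univ.filter (fun i => l.idxFun i = none) with hs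
  set a0 : ℕ := ∑ i ∈ sᶜ, ((l.idxFun i).map (fun y : Fin 4 => (y : ℕ))).getD 0 with ha0
  have hdpos : 0 < s.card := by
    refine Finset.card_pos.mpr ⟨l.proper.choose, ?_⟩
    rw [hs, Finset.mem_filter]
    exact ⟨Finset.mem_univ _, l.proper.choose_spec⟩
  have key : ∀ x : Fin 4, ∑ i, ((l x i : Fin 4) : ℕ) = s.card * (x : ℕ) + a0 := by
    intro x
    rw [← Finset.sum_add_sum_compl s]
    congr 1
    · have hconst : ∀ i ∈ s, ((l x i : Fin 4) : ℕ) = (x : ℕ) := by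
        intro i hi
        rw [hs, Finset.mem_filter] at hi
        rw [l.apply_none _ _ hi.2]
      rw [Finset.sum_congr rfl hconst, Finset.sum_const, smul_eq_mul]
    · refine Finset.sum_congr rfl fun i hi => ?_
      rw [hs, Finset.compl_filter, Finset.mem_filter] at hi
      obtain ⟨y, hy⟩ := Option.ne_none_iff_exists.mp hi.2
      rw [Line.coe_apply, ← hy]
      simp
  have ha0le : a0 ≤ 3 * sᶜ.card := by
    rw [ha0]
    calc ∑ i ∈ sᶜ, ((l.idxFun i).map (fun y : Fin 4 => (y : ℕ))).getD 0
        ≤ ∑ _i ∈ sᶜ, 3 := by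
          refine Finset.sum_le_sum fun i _ => ?_
          cases h : l.idxFun i with
          | none => simp
          | some y => simp [h]; omega
      _ = 3 * sᶜ.card := by simp [Finset.sum_const, mul_comm]
  have hcards : s.card + sᶜ.card = Fintype.card ι := by
    rw [Finset.card_add_card_compl]
  refine ⟨1 + a0, s.card, by omega, hdpos, ?_, ?_⟩
  · show 1 + a0 + 3 * s.card ≤ 3 * Fintype.card ι + 1
    omega
  · intro j hj
    have hj4 : j < 4 := by omega
    obtain ⟨xj, hxj⟩ : ∃ x : Fin 4, (x : ℕ) = j := ⟨⟨j, hj4⟩, rfl⟩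
    obtain ⟨x0, hx0⟩ : ∃ x : Fin 4, (x : ℕ) = 0 := ⟨⟨0, by norm_num⟩, rfl⟩
    have h1 : c (1 + ∑ i, ((l xj i : Fin 4) : ℕ)) - 1 = (k : ℕ) :=
      congrArg Fin.val (hl xj)
    have h0 : c (1 + ∑ i, ((l x0 i : Fin 4) : ℕ)) - 1 = (k : ℕ) :=
      congrArg Fin.val (hl x0)
    rw [key xj, hxj] at h1
    rw [key x0, hx0] at h0
    have hb1 : 1 ≤ c (1 + (s.card * j + a0)) := by
      refine (hc _ (by omega) ?_).1
      have h3 : s.card * j ≤ s.card * 3 := Nat.mul_le_mul_left _ (by omega)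
      omega
    have hb0 : 1 ≤ c (1 + (s.card * 0 + a0)) := (hc _ (by omega) (by omega)).1
    have heq1 : 1 + a0 + j * s.card = 1 + (s.card * j + a0) := by ring
    have heq0 : 1 + a0 = 1 + (s.card * 0 + a0) := by ring
    rw [heq1, heq0]
    omega

theorem vdW_three_four_gt :
    vdW 3 4 > 193 ∧
    ∃ c : ℕ → ℕ, IsColoring 3 193 c ∧ ¬ ContainsAP 4 193 c := by
  have hbad2 := vdwCol_noAP
  constructor
  · obtain ⟨m, hm, hall⟩ := vdw_finitary
    have hne : {m : ℕ | 0 < m ∧ ∀ c : ℕ → ℕ,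
        IsColoring 3 m c → ContainsAP 4 m c}.Nonempty := ⟨m, hm, hall⟩
    have hmem := Nat.sInf_mem hne
    by_contra hle
    push_neg at hle
    have hle' : vdW 3 4 ≤ 193 := hle
    obtain ⟨hpos, hall'⟩ := hmem
    have hcol' : IsColoring 3 (vdW 3 4) vdwCol := by
      intro i h1 h2
      exact vdwCol_isColoring i h1 (by omega)
    obtain ⟨a, d, ha, hd, hb, hj⟩ := hall' vdwCol hcol'
    exact hbad2 ⟨a, d, ha, hd, by
      have : a + (4-1) * d ≤ vdW 3 4 := hb
      omega, hj⟩
  · exact ⟨vdwCol, vdwCol_isColoring, hbad2⟩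
end

section
/- For all positive integers k and l with l ≥ 2, W(k,l) > (2(l−1)·k^(l−1))^(1/2); equivalently, W(k,l)² > 2(l−1)·k^(l−1). -/
/-!
Existence of `W(k, l)` is the finitary van der Waerden theorem, obtained from Hales–Jewett by
summing coordinates. For the lower bound, let `q = l - 1` and suppose every `k`-coloring of
`{1, …, m}` has a monochromatic progression `a, a + d, …, a + q d`. There are at most
`m (m - 1) / (2 q)` such progressions, and each one is monochromatic for only a `k ^ (-q)`
fraction of all colorings, so the union bound gives `k ^ q ≤ m (m - 1) / (2 q)`.
-/

open Finset

theorem exists_forall_exists_monochromatic_ap (q : ℕ) (κ : Type*) [Finite κ] :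
    ∃ N, ∀ C : ℕ → κ, ∃ b d, 0 < d ∧ b + q * d ≤ N ∧ ∀ j ≤ q, C (b + j * d) = C b := by
  classical
  obtain ⟨ι, _, hι⟩ := Combinatorics.Line.exists_mono_in_high_dimension (Fin (q + 1)) κ
  refine ⟨Fintype.card ι * q, fun C => ?_⟩
  obtain ⟨ℓ, c, hc⟩ := hι fun v => C (∑ i, (v i : ℕ))
  set s : Finset ι := {i | ℓ.idxFun i = none}
  set b := ∑ i ∈ sᶜ, ((ℓ.idxFun i).getD 0 : ℕ)
  -- The coordinate sum maps the line `ℓ` onto the progression `b, b + #s, …, b + q * #s`.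
  have hsum (x : Fin (q + 1)) : ∑ i, (ℓ x i : ℕ) = b + x * #s := by
    have hfree : ∀ i ∈ s, (ℓ x i : ℕ) = x := fun i hi => by
      rw [ℓ.apply_none _ _ (mem_filter.1 hi).2]
    have hfixed : ∀ i ∈ sᶜ, (ℓ x i : ℕ) = (ℓ.idxFun i).getD 0 := fun i hi => by
      obtain ⟨y, hy⟩ := Option.ne_none_iff_exists'.1 (by simpa [s] using hi)
      simp [hy]
    rw [← sum_add_sum_compl s, sum_congr rfl hfree, sum_congr rfl hfixed, sum_const, smul_eq_mul,
      add_comm, mul_comm]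
  refine ⟨b, #s, card_pos.2 ⟨_, mem_filter.2 ⟨mem_univ _, ℓ.proper.choose_spec⟩⟩, ?_,
    fun j hj => ?_⟩
  · calc b + q * #s = ∑ i, (ℓ (Fin.last q) i : ℕ) := by rw [hsum, Fin.val_last]
      _ ≤ ∑ _i : ι, q := sum_le_sum fun i _ => Nat.lt_succ_iff.1 (ℓ (Fin.last q) i).is_lt
      _ = Fintype.card ι * q := by rw [sum_const, card_univ, smul_eq_mul]
  · have h : C (∑ i, (ℓ ⟨j, Nat.lt_succ_of_le hj⟩ i : ℕ)) = C (∑ i, (ℓ 0 i : ℕ)) :=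
      (hc _).trans (hc 0).symm
    rwa [hsum, hsum, Fin.val_zero, zero_mul, add_zero] at h

theorem exists_pos_forall_isColoring_containsAP (k l : ℕ) :
    ∃ m, 0 < m ∧ ∀ c, IsColoring k m c → ContainsAP l m c := by
  obtain ⟨N, hN⟩ := exists_forall_exists_monochromatic_ap (l - 1) (Fin (k + 1))
  refine ⟨N + 1, N.succ_pos, fun c hc => ?_⟩
  obtain ⟨b, d, hd, hbd, hmono⟩ := hN fun n => Fin.ofNat (k + 1) (c (n + 1))
  refine ⟨b + 1, d, b.succ_pos, hd, by omega, fun j hj => ?_⟩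
  have hjd : j * d ≤ (l - 1) * d := Nat.mul_le_mul_right d hj
  have h := congrArg Fin.val (hmono j hj)
  rw [Fin.val_ofNat, Fin.val_ofNat, Nat.mod_eq_of_lt, Nat.mod_eq_of_lt] at h
  · rwa [add_right_comm]
  · exact Nat.lt_succ_of_le (hc _ (by omega) (by omega)).2
  · exact Nat.lt_succ_of_le (hc _ (by omega) (by omega)).2

/-- `(a, d)` stands for the progression `a, a + d, …, a + q * d` in `{1, …, m}`. -/
def progressions (q m : ℕ) : Finset (ℕ × ℕ) :=
  {p ∈ Icc 1 m ×ˢ Icc 1 m | p.1 + q * p.2 ≤ m}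

theorem progressions_succ_subset {q : ℕ} (hq : 0 < q) (m : ℕ) :
    progressions q (m + 1) ⊆
      progressions q m ∪ (Icc 1 (m / q)).image fun d => (m + 1 - q * d, d) := by
  rintro ⟨a, d⟩ h
  simp only [progressions, mem_filter, mem_product, mem_Icc, mem_union, mem_image,
    Prod.mk.injEq] at h ⊢
  have hqd : d ≤ q * d := Nat.le_mul_of_pos_left d hq
  by_cases ha : a + q * d ≤ m
  · left; omega
  · right
    exact ⟨d, ⟨h.1.2.1, (Nat.le_div_iff_mul_le hq).2 (by rw [mul_comm]; omega)⟩, by omega, rfl⟩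

-- Passing from `m` to `m + 1` adds only the progressions ending at `m + 1`, at most `m / q`
-- of them.
theorem two_mul_mul_card_progressions_le {q : ℕ} (hq : 0 < q) (m : ℕ) :
    2 * q * #(progressions q m) ≤ m * (m - 1) := by
  induction m with
  | zero => simp [progressions]
  | succ m ih =>
    have hcard : #(progressions q (m + 1)) ≤ #(progressions q m) + m / q :=
      (card_le_card (progressions_succ_subset hq m)).trans <| (card_union_le _ _).trans <|
        Nat.add_le_add_left (card_image_le.trans (Nat.card_Icc 1 (m / q)).le) _
    calc 2 * q * #(progressions q (m + 1)) ≤ 2 * q * (#(progressions q m) + m / q) :=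
          Nat.mul_le_mul_left _ hcard
      _ = 2 * q * #(progressions q m) + 2 * (q * (m / q)) := by ring
      _ ≤ m * (m - 1) + 2 * m := by gcongr; exact Nat.mul_div_le m q
      _ = (m + 1) * (m + 1 - 1) := by cases m <;> simp; ring

theorem pow_card_mul_card_filter_forall_mem_eq_le {α β : Type*} [Fintype α] [DecidableEq α]
    [Fintype β] [DecidableEq β] {s : Finset α} {a : α} (ha : a ∉ s) :
    Fintype.card β ^ #s * #{f : α → β | ∀ x ∈ s, f x = f a} ≤
      Fintype.card β ^ Fintype.card α := by
  have hrestrict : #{f : α → β | ∀ x ∈ s, f x = f a} ≤ Fintype.card β ^ #sᶜ := by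
    calc _ ≤ #(univ : Finset ((sᶜ : Finset α) → β)) :=
          card_le_card_of_injOn (fun f (x : (sᶜ : Finset α)) => f x)
            (fun _ _ => mem_coe.2 (mem_univ _)) ?_
      _ = _ := by rw [card_univ, Fintype.card_fun, Fintype.card_coe]
    intro f hf g hg hfg
    have hoff : ∀ x ∉ s, f x = g x := fun x hx => congrFun hfg ⟨x, mem_compl.2 hx⟩
    funext x
    by_cases hx : x ∈ s
    · rw [(mem_filter.1 hf).2 x hx, (mem_filter.1 hg).2 x hx, hoff a ha]
    · exact hoff x hx
  calc _ ≤ Fintype.card β ^ #s * Fintype.card β ^ #sᶜ := Nat.mul_le_mul_left _ hrestrict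
    _ = _ := by rw [← pow_add, add_comm, card_compl_add_card]

theorem injOn_ofNat_ap {m a d q : ℕ} (hd : 0 < d) (h : a + q * d ≤ m) :
    Set.InjOn (fun j => Fin.ofNat (m + 1) (a + j * d)) (Set.Iic q) := by
  intro i hi j hj hij
  have hid : i * d ≤ q * d := Nat.mul_le_mul_right d hi
  have hjd : j * d ≤ q * d := Nat.mul_le_mul_right d hj
  have hval := congrArg Fin.val hij
  simp only [Fin.val_ofNat] at hval
  rw [Nat.mod_eq_of_lt (by omega), Nat.mod_eq_of_lt (by omega)] at hval
  exact Nat.eq_of_mul_eq_mul_right hd (by omega)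

/-- Colorings of `Fin (m + 1)`, whose point `0` plays no role, stand for colorings of
`{1, …, m}`. -/
def monochromaticColorings (k m q : ℕ) (p : ℕ × ℕ) : Finset (Fin (m + 1) → Fin k) :=
  {f | ∀ j ∈ (Icc 1 q : Finset ℕ),
    f (Fin.ofNat (m + 1) (p.1 + j * p.2)) = f (Fin.ofNat (m + 1) p.1)}

theorem pow_mul_card_monochromaticColorings_le {k m q : ℕ} {p : ℕ × ℕ} (hd : 0 < p.2)
    (h : p.1 + q * p.2 ≤ m) : k ^ q * #(monochromaticColorings k m q p) ≤ k ^ (m + 1) := by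
  have hinj := injOn_ofNat_ap hd h
  set s := (Icc 1 q).image fun j => Fin.ofNat (m + 1) (p.1 + j * p.2)
  have hs : #s = q := by
    rw [card_image_of_injOn (hinj.mono fun j hj => (mem_Icc.1 hj).2), Nat.card_Icc,
      Nat.add_sub_cancel]
  have ha : Fin.ofNat (m + 1) p.1 ∉ s := by
    intro hx
    obtain ⟨j, hj, hja⟩ := mem_image.1 hx
    have hj0 : j = 0 := hinj (mem_Icc.1 hj).2 (Nat.zero_le q) (by simpa using hja)
    exact absurd (mem_Icc.1 hj).1 (by omega)
  have := pow_card_mul_card_filter_forall_mem_eq_le (β := Fin k) ha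
  simp only [s, forall_mem_image, Fintype.card_fin] at this hs
  rwa [hs] at this

theorem pow_le_card_progressions {k q m : ℕ} (hk : 0 < k) (hq : 0 < q)
    (H : ∀ c, IsColoring k m c → ContainsAP (q + 1) m c) : k ^ q ≤ #(progressions q m) := by
  have hcover : (univ : Finset (Fin (m + 1) → Fin k)) ⊆
      (progressions q m).biUnion (monochromaticColorings k m q) := by
    intro f _
    obtain ⟨a, d, ha, hd, hle, hf⟩ :=
      H (fun i => f (Fin.ofNat (m + 1) i) + 1) fun i _ _ => ⟨Nat.le_add_left 1 _, (f _).is_lt⟩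
    rw [Nat.add_sub_cancel] at hle hf
    refine mem_biUnion.2 ⟨(a, d), ?_, mem_filter.2 ⟨mem_univ _, fun j hj => ?_⟩⟩
    · have : d ≤ q * d := Nat.le_mul_of_pos_left d hq
      simp only [progressions, mem_filter, mem_product, mem_Icc]
      omega
    · exact Fin.ext (Nat.add_right_cancel (hf j (mem_Icc.1 hj).2))
  have hmono : ∀ p ∈ progressions q m, k ^ q * #(monochromaticColorings k m q p) ≤ k ^ (m + 1) :=
    fun p hp => by
      simp only [progressions, mem_filter, mem_product, mem_Icc] at hp
      exact pow_mul_card_monochromaticColorings_le hp.1.2.1 hp.2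
  have hcount : k ^ q * k ^ (m + 1) ≤ #(progressions q m) * k ^ (m + 1) :=
    calc k ^ q * k ^ (m + 1) = k ^ q * #(univ : Finset (Fin (m + 1) → Fin k)) := by simp
      _ ≤ k ^ q * ∑ p ∈ progressions q m, #(monochromaticColorings k m q p) :=
          Nat.mul_le_mul_left _ ((card_le_card hcover).trans card_biUnion_le)
      _ = ∑ p ∈ progressions q m, k ^ q * #(monochromaticColorings k m q p) := mul_sum _ _ _
      _ ≤ ∑ _p ∈ progressions q m, k ^ (m + 1) := sum_le_sum hmono
      _ = #(progressions q m) * k ^ (m + 1) := by rw [sum_const, smul_eq_mul]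
  exact Nat.le_of_mul_le_mul_right hcount (pow_pos hk _)

theorem vdW_erdos_rado (k l : ℕ) (hk : 0 < k) (hl : 2 ≤ l) :
    (vdW k l) ^ 2 > 2 * (l - 1) * k ^ (l - 1) := by
  have hmem : vdW k l ∈ {m | 0 < m ∧ ∀ c, IsColoring k m c → ContainsAP l m c} :=
    Nat.sInf_mem (exists_pos_forall_isColoring_containsAP k l)
  obtain ⟨hpos, hW⟩ := hmem
  obtain ⟨q, rfl⟩ : ∃ q, l = q + 1 := ⟨l - 1, by omega⟩
  have hq : 0 < q := by omega
  rw [Nat.add_sub_cancel]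
  calc 2 * q * k ^ q ≤ 2 * q * #(progressions q (vdW k (q + 1))) :=
        Nat.mul_le_mul_left _ (pow_le_card_progressions hk hq hW)
    _ ≤ vdW k (q + 1) * (vdW k (q + 1) - 1) := two_mul_mul_card_progressions_le hq _
    _ < vdW k (q + 1) ^ 2 := by
        rw [sq]; exact Nat.mul_lt_mul_of_pos_left (by omega) hpos
end
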